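/- arXiv:1309.1050 — 4 statements merged into one kernel-verified Lean document; each statement's English description precedes it below -/
import Mathlib

section
/- Let ε, C₁, C₂, c be positive real numbers with c·C₂·ε² < C₁. Let H : [0,ε) → ℝ be continuous with H(0) = 0 and differentiable on (0,ε), and let φ, ξ : [0,ε) → ℝ be continuous functions satisfying φ(t) ≥ C₁ and 0 ≤ ξ(t) ≤ C₂ for all t ∈ [0,ε). If H'(t) ≤ (c/φ(t))·∫₀ᵗ H(s)·ξ(s) ds for all t ∈ (0,ε), then H(t) ≤ 0 for all t ∈ [0,ε). -/
/-!
If `H` were positive somewhere, take a point `t₁` where `H` attains its maximum `M > 0` on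
`[0, t₀]`. The mean value theorem gives `τ ∈ (0, t₁)` with `H'(τ) = M / t₁`, while the
differential inequality bounds `H'(τ)` by `(c / C₁) · M C₂ τ`. Hence `C₁ ≤ c C₂ τ t₁ < c C₂ ε²`,
contradicting the smallness assumption.
-/

open Set

theorem exists_isMaxOn_deriv_eq_slope {f : ℝ → ℝ} {a b : ℝ} (hab : a ≤ b)
    (hf : ContinuousOn f (Icc a b)) (hfd : ∀ x ∈ Ioo a b, DifferentiableAt ℝ f x)
    (hfab : f a < f b) :
    ∃ t ∈ Ioc a b, IsMaxOn f (Icc a b) t ∧ ∃ τ ∈ Ioo a t, deriv f τ = (f t - f a) / (t - a) := by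
  obtain ⟨t, ht, hmax⟩ := isCompact_Icc.exists_isMaxOn (nonempty_Icc.2 hab) hf
  have hat : a < t := by
    refine ht.1.lt_of_ne ?_
    rintro rfl
    exact (hfab.trans_le (hmax ⟨hab, le_rfl⟩)).false
  have hsub : Icc a t ⊆ Icc a b := Icc_subset_Icc_right ht.2
  obtain ⟨τ, hτ, hderiv⟩ := exists_deriv_eq_slope f hat (hf.mono hsub)
    fun x hx ↦ (hfd x (Ioo_subset_Ioo_right ht.2 hx)).differentiableWithinAt
  exact ⟨t, ⟨hat, ht.2⟩, hmax, τ, hτ, hderiv⟩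

theorem intervalIntegral.integral_mul_le_of_le {f g : ℝ → ℝ} {a b M C : ℝ} (hab : a ≤ b)
    (hfg : IntervalIntegrable (fun s ↦ f s * g s) MeasureTheory.volume a b) (hM : 0 ≤ M)
    (hf : ∀ s ∈ Icc a b, f s ≤ M) (hg₀ : ∀ s ∈ Icc a b, 0 ≤ g s)
    (hgC : ∀ s ∈ Icc a b, g s ≤ C) :
    ∫ s in a..b, f s * g s ≤ M * C * (b - a) := by
  calc ∫ s in a..b, f s * g s ≤ ∫ _ in a..b, M * C :=
        integral_mono_on hab hfg intervalIntegrable_const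
          fun s hs ↦ mul_le_mul (hf s hs) (hgC s hs) (hg₀ s hs) hM
    _ = M * C * (b - a) := by rw [integral_const, smul_eq_mul, mul_comm]

theorem gronwall_type_ineq_general
    (ε C₁ C₂ c : ℝ) (hC₁ : 0 < C₁) (hc : 0 < c)
    (hsmall : c * C₂ * ε ^ 2 < C₁)
    (H φ ξ : ℝ → ℝ)
    (hHcont : ContinuousOn H (Set.Ico 0 ε))
    (hH0 : H 0 = 0)
    (hHdiff : ∀ t ∈ Set.Ioo (0 : ℝ) ε, DifferentiableAt ℝ H t)
    (hξcont : ContinuousOn ξ (Set.Ico 0 ε))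
    (hφ : ∀ t ∈ Set.Ico (0 : ℝ) ε, C₁ ≤ φ t)
    (hξ0 : ∀ t ∈ Set.Ico (0 : ℝ) ε, 0 ≤ ξ t)
    (hξC : ∀ t ∈ Set.Ico (0 : ℝ) ε, ξ t ≤ C₂)
    (hineq : ∀ t ∈ Set.Ioo (0 : ℝ) ε,
      deriv H t ≤ (c / φ t) * ∫ s in (0 : ℝ)..t, H s * ξ s) :
    ∀ t ∈ Set.Ico (0 : ℝ) ε, H t ≤ 0 := by
  intro t₀ ⟨ht₀, ht₀ε⟩
  by_contra! hpos
  have hsub : Icc 0 t₀ ⊆ Ico 0 ε := Icc_subset_Ico_right ht₀ε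
  obtain ⟨t₁, ⟨ht₁, ht₁t₀⟩, hmax, τ, ⟨hτ, hτt₁⟩, hderiv⟩ :=
    exists_isMaxOn_deriv_eq_slope ht₀ (hHcont.mono hsub)
      (fun x hx ↦ hHdiff x (Ioo_subset_Ioo_right ht₀ε.le hx)) (by rwa [hH0])
  rw [hH0, sub_zero, sub_zero] at hderiv
  have hM : 0 < H t₁ := hpos.trans_le (hmax ⟨ht₀, le_rfl⟩)
  have hτI : Icc 0 τ ⊆ Icc 0 t₀ := Icc_subset_Icc_right (hτt₁.trans_le ht₁t₀).le
  have hτε : τ ∈ Ioo 0 ε := ⟨hτ, hτt₁.trans_le ht₁t₀ |>.trans ht₀ε⟩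
  have hint : ∫ s in (0 : ℝ)..τ, H s * ξ s ≤ H t₁ * C₂ * τ := by
    simpa only [sub_zero] using intervalIntegral.integral_mul_le_of_le hτ.le
      (((hHcont.mul hξcont).mono (hτI.trans hsub)).intervalIntegrable_of_Icc hτ.le) hM.le
      (fun s hs ↦ hmax (hτI hs)) (fun s hs ↦ hξ0 s (hsub (hτI hs)))
      (fun s hs ↦ hξC s (hsub (hτI hs)))
  have hφτ : C₁ ≤ φ τ := hφ τ (Ioo_subset_Ico_self hτε)
  have hslope : C₁ * (H t₁ / t₁) ≤ c * (H t₁ * C₂ * τ) :=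
    calc C₁ * (H t₁ / t₁) ≤ φ τ * deriv H τ := by
          rw [hderiv]; exact mul_le_mul_of_nonneg_right hφτ (by positivity)
      _ ≤ c * ∫ s in (0 : ℝ)..τ, H s * ξ s := by
          have := hineq τ hτε
          rwa [div_mul_eq_mul_div, le_div_iff₀ (hC₁.trans_le hφτ), mul_comm] at this
      _ ≤ c * (H t₁ * C₂ * τ) := mul_le_mul_of_nonneg_left hint hc.le
  have hC₂ : 0 ≤ C₂ := (hξ0 τ (Ioo_subset_Ico_self hτε)).trans (hξC τ (Ioo_subset_Ico_self hτε))
  have hτt₁ε : τ * t₁ ≤ ε ^ 2 := by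
    rw [sq]; exact mul_le_mul hτε.2.le (ht₁t₀.trans ht₀ε.le) ht₁.le (hτ.trans hτε.2).le
  have hsmall' : c * C₂ * (τ * t₁) < C₁ :=
    (mul_le_mul_of_nonneg_left hτt₁ε (mul_nonneg hc.le hC₂)).trans_lt hsmall
  refine hslope.not_gt ?_
  calc c * (H t₁ * C₂ * τ) = c * C₂ * (τ * t₁) * (H t₁ / t₁) := by field_simp
    _ < C₁ * (H t₁ / t₁) := by gcongr

/-- Gronwall-type inequality: if `H' (t) ≤ (c/φ(t)) ∫₀ᵗ H ξ` with `φ ≥ C₁ > 0`,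
`0 ≤ ξ ≤ C₂` and `c C₂ ε² < C₁`, `H(0) = 0`, then `H ≤ 0` on `[0, ε)`. -/
theorem gronwall_type_ineq
    (ε C₁ C₂ c : ℝ) (hε : 0 < ε) (hC₁ : 0 < C₁) (hC₂ : 0 < C₂) (hc : 0 < c)
    (hsmall : c * C₂ * ε ^ 2 < C₁)
    (H φ ξ : ℝ → ℝ)
    (hHcont : ContinuousOn H (Set.Ico 0 ε))
    (hH0 : H 0 = 0)
    (hHdiff : ∀ t ∈ Set.Ioo (0 : ℝ) ε, DifferentiableAt ℝ H t)
    (hφcont : ContinuousOn φ (Set.Ico 0 ε))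
    (hξcont : ContinuousOn ξ (Set.Ico 0 ε))
    (hφ : ∀ t ∈ Set.Ico (0 : ℝ) ε, C₁ ≤ φ t)
    (hξ0 : ∀ t ∈ Set.Ico (0 : ℝ) ε, 0 ≤ ξ t)
    (hξC : ∀ t ∈ Set.Ico (0 : ℝ) ε, ξ t ≤ C₂)
    (hineq : ∀ t ∈ Set.Ioo (0 : ℝ) ε,
      deriv H t ≤ (c / φ t) * ∫ s in (0 : ℝ)..t, H s * ξ s) :
    ∀ t ∈ Set.Ico (0 : ℝ) ε, H t ≤ 0 :=
  gronwall_type_ineq_general ε C₁ C₂ c hC₁ hc hsmall H φ ξ hHcont hH0 hHdiff hξcont hφ hξ0 hξC hineq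
end

section
/- Let n ≥ 4 be an integer and define u, w : ℝ → ℝ by u(t) = (1+(n−3)t⁴)⁻¹ and w(t) = 1+2t⁴+2t⁸. Then there exist constants C > 0 and δ > 0 such that for all t with |t| < δ, |2·u''(t)/u(t) + (n−3)·w''(t)/w(t)| ≤ C·t⁶. In particular this quantity vanishes at t = 0. -/
/-! The coefficients are tuned so that the `t²` terms of `2u''/u = 2(20a²t⁶ - 12at²)/(1 + at⁴)²`
and of `a w''/w = a(24t² + 112t⁶)/w`, with `a = n - 3`, cancel. Clearing denominators, the sum is
`t⁶` times a rational function whose denominator does not vanish at `0`; such a function is bounded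
near `0`. -/

theorem exists_abs_le_mul_abs_pow_of_continuousAt {f g : ℝ → ℝ} (k : ℕ)
    (hfg : ∀ t, f t = t ^ k * g t) (hg : ContinuousAt g 0) :
    ∃ C > 0, ∃ δ > 0, ∀ t, |t| < δ → |f t| ≤ C * |t| ^ k := by
  obtain ⟨δ, hδ, hclose⟩ := Metric.continuousAt_iff.mp hg 1 one_pos
  refine ⟨|g 0| + 1, by positivity, δ, hδ, fun t ht => ?_⟩
  have hgt : |g t| ≤ |g 0| + 1 := by
    have := hclose (x := t) (by simpa [Real.dist_eq] using ht)
    rw [Real.dist_eq] at this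
    linarith [abs_sub_abs_le_abs_sub (g t) (g 0)]
  rw [hfg, abs_mul, abs_pow, mul_comm]
  exact mul_le_mul_of_nonneg_right hgt (by positivity)

theorem hasDerivAt_one_add_two_mul_pow_four_add_two_mul_pow_eight (t : ℝ) :
    HasDerivAt (fun t => 1 + 2 * t ^ 4 + 2 * t ^ 8) (8 * t ^ 3 + 16 * t ^ 7) t :=
  ((((hasDerivAt_pow 4 t).const_mul 2).const_add 1).add
    ((hasDerivAt_pow 8 t).const_mul 2)).congr_deriv (by norm_num; ring)

theorem deriv_deriv_one_add_two_mul_pow_four_add_two_mul_pow_eight (t : ℝ) :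
    deriv (deriv fun t : ℝ => 1 + 2 * t ^ 4 + 2 * t ^ 8) t = 24 * t ^ 2 + 112 * t ^ 6 := by
  have hw' : deriv (fun t : ℝ => 1 + 2 * t ^ 4 + 2 * t ^ 8) = fun t => 8 * t ^ 3 + 16 * t ^ 7 :=
    funext fun t => (hasDerivAt_one_add_two_mul_pow_four_add_two_mul_pow_eight t).deriv
  rw [hw']
  exact ((((hasDerivAt_pow 3 t).const_mul 8).add
    ((hasDerivAt_pow 7 t).const_mul 16)).congr_deriv (by norm_num; ring)).deriv

theorem hasDerivAt_one_add_mul_pow_four (a t : ℝ) :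
    HasDerivAt (fun t => 1 + a * t ^ 4) (4 * a * t ^ 3) t :=
  (((hasDerivAt_pow 4 t).const_mul a).const_add 1).congr_deriv (by norm_num; ring)

section

variable {a : ℝ}

theorem deriv_inv_one_add_mul_pow_four (ha : 0 ≤ a) :
    deriv (fun t : ℝ => (1 + a * t ^ 4)⁻¹) = fun t => -(4 * a * t ^ 3) / (1 + a * t ^ 4) ^ 2 := by
  funext t
  exact ((hasDerivAt_one_add_mul_pow_four a t).inv (by positivity)).deriv

theorem deriv_deriv_inv_one_add_mul_pow_four (ha : 0 ≤ a) (t : ℝ) :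
    deriv (deriv fun t : ℝ => (1 + a * t ^ 4)⁻¹) t =
      (20 * a ^ 2 * t ^ 6 - 12 * a * t ^ 2) / (1 + a * t ^ 4) ^ 3 := by
  have hA : 1 + a * t ^ 4 ≠ 0 := by positivity
  have hnum : HasDerivAt (fun t => -(4 * a * t ^ 3)) (-(12 * a * t ^ 2)) t :=
    ((hasDerivAt_pow 3 t).const_mul (4 * a)).neg.congr_deriv (by norm_num; ring)
  rw [deriv_inv_one_add_mul_pow_four ha,
    (hnum.fun_div ((hasDerivAt_one_add_mul_pow_four a t).fun_pow 2) (by positivity)).deriv]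
  field_simp
  ring

theorem two_mul_deriv_deriv_div_add_mul_deriv_deriv_div {u w : ℝ → ℝ} (ha : 0 ≤ a)
    (hu : u = fun t => (1 + a * t ^ 4)⁻¹) (hw : w = fun t => 1 + 2 * t ^ 4 + 2 * t ^ 8) (t : ℝ) :
    2 * deriv (deriv u) t / u t + a * deriv (deriv w) t / w t =
      t ^ 6 * (((64 * a + 88 * a ^ 2) + (304 * a ^ 2 + 24 * a ^ 3 - 48 * a) * t ^ 4 +
          (80 * a ^ 2 + 112 * a ^ 3) * t ^ 8) /
        ((1 + a * t ^ 4) ^ 2 * (1 + 2 * t ^ 4 + 2 * t ^ 8))) := by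
  have hA : 1 + a * t ^ 4 ≠ 0 := by positivity
  have hB : 1 + 2 * t ^ 4 + 2 * t ^ 8 ≠ 0 := by positivity
  subst hu hw
  rw [deriv_deriv_inv_one_add_mul_pow_four ha,
    deriv_deriv_one_add_two_mul_pow_four_add_two_mul_pow_eight]
  field_simp
  ring

end

/-- For `u(t) = (1+(n-3)t⁴)⁻¹`, `w(t) = 1+2t⁴+2t⁸` and `n ≥ 4`, the quantity
`2u''/u + (n-3)w''/w` is `O(t⁶)` near `0`, and in particular vanishes at `t = 0`. -/
theorem normal_ricci_order_case1
    (n : ℕ) (hn : 4 ≤ n) (u w : ℝ → ℝ)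
    (hu : u = fun t => (1 + ((n : ℝ) - 3) * t ^ 4)⁻¹)
    (hw : w = fun t => 1 + 2 * t ^ 4 + 2 * t ^ 8) :
    (∃ C > (0 : ℝ), ∃ δ > (0 : ℝ), ∀ t : ℝ, |t| < δ →
        |2 * deriv (deriv u) t / u t + ((n : ℝ) - 3) * deriv (deriv w) t / w t|
          ≤ C * t ^ 6) ∧
      2 * deriv (deriv u) 0 / u 0 + ((n : ℝ) - 3) * deriv (deriv w) 0 / w 0 = 0 := by
  have ha : (0 : ℝ) ≤ n - 3 := by
    have : (4 : ℝ) ≤ n := by exact_mod_cast hn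
    linarith
  have key := two_mul_deriv_deriv_div_add_mul_deriv_deriv_div ha hu hw
  obtain ⟨C, hC, δ, hδ, hbound⟩ :=
    exists_abs_le_mul_abs_pow_of_continuousAt 6 key (by fun_prop (disch := norm_num))
  refine ⟨⟨C, hC, δ, hδ, fun t ht => ?_⟩, by simpa using key 0⟩
  simpa only [Even.pow_abs (by decide : Even 6)] using hbound t ht
end

section
/- Let n ≥ 4 be an integer and define u, w : ℝ → ℝ by u(t) = (1+(n−3)t⁴)⁻¹ and w(t) = 1+2t⁴+2t⁸. Then for every real t > 0, 2·u'(t)/u(t) + (n−3)·w'(t)/w(t) > 0. -/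
/-! With `m = n - 3`, `2u'/u + m w'/w` is `2 (log u)' + m (log w)'`, and over a common denominator it
equals `8 m t⁷ (m + 2 (m - 1) t⁴) / ((1 + m t⁴)(1 + 2t⁴ + 2t⁸))`, which is positive for `m ≥ 1`, `t > 0`. -/

theorem logDeriv_fun_inv {𝕜 𝕜' : Type*} [NontriviallyNormedField 𝕜] [NontriviallyNormedField 𝕜']
    [NormedAlgebra 𝕜 𝕜'] {f : 𝕜 → 𝕜'} {x : 𝕜} (hf : DifferentiableAt 𝕜 f x) :
    logDeriv (fun y ↦ (f y)⁻¹) x = -logDeriv f x := by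
  simpa using logDeriv_fun_zpow hf (-1)

theorem logDeriv_one_add_mul_pow_four (a x : ℝ) :
    logDeriv (fun s ↦ 1 + a * s ^ 4) x = 4 * a * x ^ 3 / (1 + a * x ^ 4) := by
  rw [logDeriv_apply, (((hasDerivAt_pow 4 x).const_mul a).const_add 1).deriv]
  ring

theorem logDeriv_one_add_two_mul_pow_four_add_two_mul_pow_eight (x : ℝ) :
    logDeriv (fun s ↦ 1 + 2 * s ^ 4 + 2 * s ^ 8) x
      = (8 * x ^ 3 + 16 * x ^ 7) / (1 + 2 * x ^ 4 + 2 * x ^ 8) := by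
  have h : HasDerivAt (fun s ↦ 1 + 2 * s ^ 4 + 2 * s ^ 8) (2 * (4 * x ^ 3) + 2 * (8 * x ^ 7)) x :=
    (((hasDerivAt_pow 4 x).const_mul 2).const_add 1).add ((hasDerivAt_pow 8 x).const_mul 2)
  rw [logDeriv_apply, h.deriv]
  ring

theorem mean_curvature_eq (m t : ℝ) (h : 1 + m * t ^ 4 ≠ 0) :
    2 * -(4 * m * t ^ 3 / (1 + m * t ^ 4))
        + m * ((8 * t ^ 3 + 16 * t ^ 7) / (1 + 2 * t ^ 4 + 2 * t ^ 8))
      = 8 * m * t ^ 7 * (m + 2 * (m - 1) * t ^ 4)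
          / ((1 + m * t ^ 4) * (1 + 2 * t ^ 4 + 2 * t ^ 8)) := by
  field_simp
  ring

theorem mean_curvature_pos {m t : ℝ} (hm : 1 ≤ m) (ht : 0 < t) :
    0 < 2 * -(4 * m * t ^ 3 / (1 + m * t ^ 4))
        + m * ((8 * t ^ 3 + 16 * t ^ 7) / (1 + 2 * t ^ 4 + 2 * t ^ 8)) := by
  have hm₀ : 0 < m := by linarith
  have hm₁ : 0 ≤ m - 1 := by linarith
  rw [mean_curvature_eq m t (by positivity)]
  positivity

/-- Mean curvature positivity in Case 1 of Proposition 6: with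
`u(t) = (1+(n-3)t⁴)⁻¹` and `w(t) = 1+2t⁴+2t⁸`, for every `t > 0`,
`2u'/u + (n-3)w'/w > 0`. -/
theorem mean_curvature_positive_case1
    (n : ℕ) (hn : 4 ≤ n) (u w : ℝ → ℝ)
    (hu : u = fun t => (1 + ((n : ℝ) - 3) * t ^ 4)⁻¹)
    (hw : w = fun t => 1 + 2 * t ^ 4 + 2 * t ^ 8)
    (t : ℝ) (ht : 0 < t) :
    0 < 2 * deriv u t / u t + ((n : ℝ) - 3) * deriv w t / w t := by
  have hm : (1 : ℝ) ≤ n - 3 := by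
    have : (4 : ℝ) ≤ n := by exact_mod_cast hn
    linarith
  have hlog : 2 * deriv u t / u t + ((n : ℝ) - 3) * deriv w t / w t
      = 2 * logDeriv u t + ((n : ℝ) - 3) * logDeriv w t := by
    simp only [logDeriv_apply, mul_div_assoc]
  rw [hlog, hu, hw, logDeriv_fun_inv (by fun_prop), logDeriv_one_add_mul_pow_four,
    logDeriv_one_add_two_mul_pow_four_add_two_mul_pow_eight]
  exact mean_curvature_pos hm ht
end

section
/- Define u : ℝ → ℝ by u(t) = √(1+t⁴), and define S(t) = 2/u(t)² − 4·u''(t)/u(t) − 2·u'(t)²/u(t)². Then S(0) = 2 and S(t) < 2 for every real t ≠ 0 (in particular for all 0 < |t| < δ for any δ > 0). -/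
/-! For a warping function `u = √f` with `f > 0`, the chain rule turns the curvature expression
`2/u² - 4u''/u - 2u'²/u²` into `(2 - 2f'')/f + f'²/(2f²)`, which involves no square roots.
For `f = 1 + t⁴` this equals `2 - 2t²(12 + t² + 8t⁴ + t⁶)/(1 + t⁴)²`, so it is `2` at `t = 0`
and strictly smaller elsewhere. -/

open Real

section SqrtWarping

variable {f f' f'' : ℝ → ℝ}

lemma deriv_sqrt_eq_of_hasDerivAt (hf : ∀ t, 0 < f t) (hf' : ∀ t, HasDerivAt f (f' t) t) :
    deriv (fun t => √(f t)) = fun t => f' t / (2 * √(f t)) :=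
  funext fun t => ((hf' t).sqrt (hf t).ne').deriv

lemma deriv_deriv_sqrt_eq_of_hasDerivAt (hf : ∀ t, 0 < f t) (hf' : ∀ t, HasDerivAt f (f' t) t)
    (hf'' : ∀ t, HasDerivAt f' (f'' t) t) (t : ℝ) :
    deriv (deriv fun t => √(f t)) t = (2 * f t * f'' t - f' t ^ 2) / (4 * f t * √(f t)) := by
  have hsqrt : HasDerivAt (fun t => 2 * √(f t)) (2 * (f' t / (2 * √(f t)))) t :=
    ((hf' t).sqrt (hf t).ne').const_mul 2
  have hquot : HasDerivAt (fun t => f' t / (2 * √(f t)))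
      ((f'' t * (2 * √(f t)) - f' t * (2 * (f' t / (2 * √(f t))))) / (2 * √(f t)) ^ 2) t :=
    (hf'' t).div hsqrt (by positivity [hf t])
  rw [deriv_sqrt_eq_of_hasDerivAt hf hf', hquot.deriv]
  have hs : √(f t) ^ 2 = f t := sq_sqrt (hf t).le
  have hs_pos : 0 < √(f t) := sqrt_pos.2 (hf t)
  -- abstracting the root lets `f t` be replaced by `s ^ 2` without rewriting under `√`
  generalize √(f t) = s at hs hs_pos ⊢
  rw [← hs]
  field_simp
  ring

lemma curvature_sqrt_eq (hf : ∀ t, 0 < f t) (hf' : ∀ t, HasDerivAt f (f' t) t)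
    (hf'' : ∀ t, HasDerivAt f' (f'' t) t) (t : ℝ) :
    2 / √(f t) ^ 2 - 4 * deriv (deriv fun t => √(f t)) t / √(f t)
        - 2 * deriv (fun t => √(f t)) t ^ 2 / √(f t) ^ 2
      = (2 - 2 * f'' t) / f t + f' t ^ 2 / (2 * f t ^ 2) := by
  rw [deriv_deriv_sqrt_eq_of_hasDerivAt hf hf' hf'', deriv_sqrt_eq_of_hasDerivAt hf hf']
  beta_reduce
  have hs : √(f t) ^ 2 = f t := sq_sqrt (hf t).le
  have hs_pos : 0 < √(f t) := sqrt_pos.2 (hf t)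
  generalize √(f t) = s at hs hs_pos ⊢
  rw [← hs]
  field_simp
  ring

end SqrtWarping

lemma curvature_sqrt_one_add_pow_four (t : ℝ) :
    2 / √(1 + t ^ 4) ^ 2 - 4 * deriv (deriv fun t => √(1 + t ^ 4)) t / √(1 + t ^ 4)
        - 2 * deriv (fun t => √(1 + t ^ 4)) t ^ 2 / √(1 + t ^ 4) ^ 2
      = 2 - 2 * t ^ 2 * (12 + t ^ 2 + 8 * t ^ 4 + t ^ 6) / (1 + t ^ 4) ^ 2 := by
  have hf' (t : ℝ) : HasDerivAt (fun t : ℝ => 1 + t ^ 4) (4 * t ^ 3) t :=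
    ((hasDerivAt_pow 4 t).const_add 1).congr_deriv (by ring)
  have hf'' (t : ℝ) : HasDerivAt (fun t : ℝ => 4 * t ^ 3) (12 * t ^ 2) t :=
    ((hasDerivAt_pow 3 t).const_mul 4).congr_deriv (by ring)
  rw [curvature_sqrt_eq (f := fun t => 1 + t ^ 4) (fun t => by positivity) hf' hf'']
  have : 1 + t ^ 4 ≠ 0 := by positivity
  field_simp
  ring

/-- For `u(t) = √(1+t⁴)`, the scalar curvature `S(t) = 2/u² - 4u''/u - 2u'²/u²`
of `S² × (-ε,ε)` with metric `(1+t⁴)ds² + dt²` equals `2` at `t = 0` and is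
strictly less than `2` for all `t ≠ 0`. -/
theorem scalar_curvature_decreases_example
    (u S : ℝ → ℝ)
    (hu : u = fun t => Real.sqrt (1 + t ^ 4))
    (hS : S = fun t =>
      2 / (u t) ^ 2 - 4 * deriv (deriv u) t / u t - 2 * (deriv u t) ^ 2 / (u t) ^ 2) :
    S 0 = 2 ∧ ∀ t : ℝ, t ≠ 0 → S t < 2 := by
  have hS_eq (t : ℝ) : S t = 2 - 2 * t ^ 2 * (12 + t ^ 2 + 8 * t ^ 4 + t ^ 6) / (1 + t ^ 4) ^ 2 := by
    simp only [hS, hu]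
    exact curvature_sqrt_one_add_pow_four t
  refine ⟨by simp [hS_eq], fun t ht => ?_⟩
  rw [hS_eq, sub_lt_self_iff]
  have : 0 < t ^ 2 := by positivity
  positivity
end
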